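/- arXiv:1701.06096 — 3 statements merged into one kernel-verified Lean document; each statement's English description precedes it below -/
import Mathlib

section
/- Weak duality between (LinearP) and (LinearD): for every primal feasible solution (x,y) of (LinearP) and every dual feasible solution (λ, μ, ν, π) of (LinearD), the dual objective value satisfies −Σ_{k∈K} m_k CVaR_α(c_k⊤Z) − λ⊤b + Σ_{s∈S} p_s π_s⊤h_s ≤ f⊤x + Σ_{s∈S} p_s q_s⊤y_s. -/
open Matrix
open scoped BigOperators Classical

/-- Conditional value-at-risk at confidence level `α` of a random variable with
realizations `v s` and probabilities `p s` on a finite space. -/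
noncomputable def CVaR {ι : Type*} [Fintype ι] (α : ℝ) (p v : ι → ℝ) : ℝ :=
  sInf {r : ℝ | ∃ η : ℝ, r = η + (1 - α)⁻¹ * ∑ s, p s * max (v s - η) 0}

/-- Value-at-risk at confidence level `α`: the minimal `η` with `P(V ≤ η) ≥ α`
(stated as an infimum; the minimum exists for finitely many realizations). -/
noncomputable def VaR {ι : Type*} [Fintype ι] (α : ℝ) (p v : ι → ℝ) : ℝ :=
  sInf {η : ℝ | α ≤ ∑ s, if v s ≤ η then p s else 0}

/-- The scenario-`s` realization `ĝ_s(x,y_s) = ḡ_s x + g̃_s y_s` of the random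
outcome vector `Ĝ(x,y)`. -/
noncomputable def Ghat {m n1 n2 d : ℕ} (gbar : Fin m → Matrix (Fin d) (Fin n1) ℝ)
    (gtil : Fin m → Matrix (Fin d) (Fin n2) ℝ)
    (x : Fin n1 → ℝ) (y : Fin m → Fin n2 → ℝ) (s : Fin m) : Fin d → ℝ :=
  (gbar s).mulVec x + (gtil s).mulVec (y s)

/-- `x ∈ X` and `y_s ∈ Y(x,s)` for every scenario `s`. -/
def InXY {m m1 m2 n1 n2 : ℕ} (A : Matrix (Fin m1) (Fin n1) ℝ) (b : Fin m1 → ℝ)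
    (Tm : Fin m → Matrix (Fin m2) (Fin n1) ℝ)
    (Wm : Fin m → Matrix (Fin m2) (Fin n2) ℝ)
    (hvec : Fin m → Fin m2 → ℝ) (x : Fin n1 → ℝ) (y : Fin m → Fin n2 → ℝ) : Prop :=
  (∀ i, 0 ≤ x i) ∧ (∀ i, A.mulVec x i ≤ b i) ∧
    ∀ s, (∀ j, 0 ≤ y s j) ∧ ∀ i, hvec s i ≤ ((Tm s).mulVec x + (Wm s).mulVec (y s)) i

/-- Feasibility for problem (LinearP). -/
def PrimalFeas {m m1 m2 n1 n2 d τ : ℕ} (α : ℝ) (p : Fin m → ℝ)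
    (A : Matrix (Fin m1) (Fin n1) ℝ) (b : Fin m1 → ℝ)
    (Tm : Fin m → Matrix (Fin m2) (Fin n1) ℝ)
    (Wm : Fin m → Matrix (Fin m2) (Fin n2) ℝ)
    (hvec : Fin m → Fin m2 → ℝ)
    (gbar : Fin m → Matrix (Fin d) (Fin n1) ℝ)
    (gtil : Fin m → Matrix (Fin d) (Fin n2) ℝ)
    (z : Fin τ → Fin d → ℝ) (pt : Fin τ → ℝ) (C : Set (Fin d → ℝ))
    (x : Fin n1 → ℝ) (y : Fin m → Fin n2 → ℝ) : Prop :=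
  InXY A b Tm Wm hvec x y ∧
    ∀ c ∈ C, CVaR α p (fun s => c ⬝ᵥ Ghat gbar gtil x y s)
      ≤ CVaR α pt (fun i => c ⬝ᵥ z i)

/-- Objective function of problem (LinearP). -/
noncomputable def PrimalObj {m n1 n2 : ℕ} (p : Fin m → ℝ) (fv : Fin n1 → ℝ)
    (q : Fin m → Fin n2 → ℝ) (x : Fin n1 → ℝ) (y : Fin m → Fin n2 → ℝ) : ℝ :=
  fv ⬝ᵥ x + ∑ s, p s * (q s ⬝ᵥ y s)

/-- Feasibility for the dual problem (LinearD), with the finitely supported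
measures `μ` and `ν_s` represented by common support points `c k` and weights
`mw k` and `nw s k` (`k ∈ Fin K`). -/
def DualFeas {m m1 m2 n1 n2 d K : ℕ} (α : ℝ) (p : Fin m → ℝ)
    (A : Matrix (Fin m1) (Fin n1) ℝ) (fv : Fin n1 → ℝ)
    (Tm : Fin m → Matrix (Fin m2) (Fin n1) ℝ)
    (Wm : Fin m → Matrix (Fin m2) (Fin n2) ℝ)
    (q : Fin m → Fin n2 → ℝ)
    (gbar : Fin m → Matrix (Fin d) (Fin n1) ℝ)
    (gtil : Fin m → Matrix (Fin d) (Fin n2) ℝ)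
    (C : Set (Fin d → ℝ))
    (c : Fin K → Fin d → ℝ) (mw : Fin K → ℝ) (nw : Fin m → Fin K → ℝ)
    (lam : Fin m1 → ℝ) (piv : Fin m → Fin m2 → ℝ) : Prop :=
  (∀ k, c k ∈ C) ∧ (∀ k, 0 ≤ mw k) ∧ (∀ s k, 0 ≤ nw s k) ∧
    (∀ i, 0 ≤ lam i) ∧ (∀ s i, 0 ≤ piv s i) ∧
    (∀ k, ∑ s, p s * nw s k = mw k) ∧
    (∀ s k, nw s k ≤ mw k / (1 - α)) ∧
    (∀ j, ∑ s, p s * (Matrix.vecMul (piv s) (Tm s) j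
        - ∑ k, nw s k * Matrix.vecMul (c k) (gbar s) j)
      ≤ fv j + Matrix.vecMul lam A j) ∧
    ∀ s j, Matrix.vecMul (piv s) (Wm s) j
        - ∑ k, nw s k * Matrix.vecMul (c k) (gtil s) j ≤ q s j

/-- Objective function of the dual problem (LinearD). -/
noncomputable def DualObj {m m1 m2 d τ K : ℕ} (α : ℝ) (p : Fin m → ℝ)
    (b : Fin m1 → ℝ) (hvec : Fin m → Fin m2 → ℝ)
    (z : Fin τ → Fin d → ℝ) (pt : Fin τ → ℝ)
    (c : Fin K → Fin d → ℝ) (mw : Fin K → ℝ)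
    (lam : Fin m1 → ℝ) (piv : Fin m → Fin m2 → ℝ) : ℝ :=
  -(∑ k, mw k * CVaR α pt (fun i => c k ⬝ᵥ z i)) - lam ⬝ᵥ b
    + ∑ s, p s * (piv s ⬝ᵥ hvec s)

/-!
Pair the primal constraints with the dual multipliers: `λ ≥ 0` against `A x ≤ b` and
`π_s ≥ 0` against `T_s x + W_s y_s ≥ h_s`, then use the dual constraints on the
nonnegative variables `x` and `y_s`. What is left over is, for each `k`, the average
`∑_s p_s n_{s,k} c_k⊤ĝ_s(x,y_s)`. Since `ν_{·,k}` is a density of total mass `m_k`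
bounded by `m_k/(1-α)`, this average is at most `m_k CVaR_α(c_k⊤Ĝ(x,y))` (the variational
formula of CVaR), and primal feasibility bounds that by `m_k CVaR_α(c_k⊤Z)`.
-/

open Finset

section CVaR

variable {ι : Type*} [Fintype ι] {α M : ℝ} {p n v : ι → ℝ}

theorem sum_mul_le_mul_cvar_objective (hp : 0 ≤ p) (hn : 0 ≤ n)
    (hsum : ∑ s, p s * n s = M) (hbd : ∀ s, n s ≤ M / (1 - α)) (η : ℝ) :
    ∑ s, p s * n s * v s ≤ M * (η + (1 - α)⁻¹ * ∑ s, p s * max (v s - η) 0) := by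
  have hterm : ∀ s, p s * n s * (v s - η) ≤ p s * (M / (1 - α)) * max (v s - η) 0 := fun s =>
    calc p s * n s * (v s - η) ≤ p s * n s * max (v s - η) 0 :=
          mul_le_mul_of_nonneg_left (le_max_left _ _) (mul_nonneg (hp s) (hn s))
      _ ≤ p s * (M / (1 - α)) * max (v s - η) 0 :=
          mul_le_mul_of_nonneg_right (mul_le_mul_of_nonneg_left (hbd s) (hp s))
            (le_max_right _ _)
  calc ∑ s, p s * n s * v s = ∑ s, p s * n s * (v s - η) + M * η := by
        rw [← hsum, sum_mul, ← sum_add_distrib]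
        exact sum_congr rfl fun s _ => by ring
    _ ≤ ∑ s, p s * (M / (1 - α)) * max (v s - η) 0 + M * η :=
        add_le_add_left (sum_le_sum fun s _ => hterm s) _
    _ = M * (η + (1 - α)⁻¹ * ∑ s, p s * max (v s - η) 0) := by
        rw [mul_add, mul_sum, mul_sum, add_comm]
        congr 1
        exact sum_congr rfl fun s _ => by ring

theorem sum_mul_le_mul_CVaR (hp : 0 ≤ p) (hn : 0 ≤ n)
    (hsum : ∑ s, p s * n s = M) (hbd : ∀ s, n s ≤ M / (1 - α)) :
    ∑ s, p s * n s * v s ≤ M * CVaR α p v := by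
  have hM : 0 ≤ M := hsum ▸ sum_nonneg fun s _ => mul_nonneg (hp s) (hn s)
  rw [CVaR, ← smul_eq_mul, ← Real.sInf_smul_of_nonneg hM]
  refine le_csInf (Set.Nonempty.smul_set ⟨_, 0, rfl⟩) ?_
  rintro _ ⟨_, ⟨η, rfl⟩, rfl⟩
  exact sum_mul_le_mul_cvar_objective hp hn hsum hbd η

end CVaR

section LinearDuality

variable {R : Type*} [CommRing R] [PartialOrder R] [IsOrderedRing R]
  {l m n : Type*} [Fintype m] [Fintype n]

theorem dotProduct_le_of_mulVec_le {A : Matrix m n R} {b : m → R} {f u x : n → R}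
    {lam : m → R} (hx : 0 ≤ x) (hAx : A *ᵥ x ≤ b) (hlam : 0 ≤ lam) (hu : u ≤ f + lam ᵥ* A) :
    u ⬝ᵥ x ≤ f ⬝ᵥ x + lam ⬝ᵥ b :=
  calc u ⬝ᵥ x ≤ (f + lam ᵥ* A) ⬝ᵥ x := dotProduct_le_dotProduct_of_nonneg_right hu hx
    _ = f ⬝ᵥ x + lam ⬝ᵥ A *ᵥ x := by rw [add_dotProduct, dotProduct_mulVec]
    _ ≤ f ⬝ᵥ x + lam ⬝ᵥ b := by
        gcongr
        exact dotProduct_le_dotProduct_of_nonneg_left hAx hlam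

theorem dotProduct_le_of_le_mulVec_add_mulVec [Fintype l] {T : Matrix m l R}
    {W : Matrix m n R} {h : m → R} {x : l → R} {y q : n → R} {π : m → R}
    (hy : 0 ≤ y) (hfeas : h ≤ T *ᵥ x + W *ᵥ y) (hπ : 0 ≤ π) (hq : π ᵥ* W ≤ q) :
    π ⬝ᵥ h ≤ (π ᵥ* T) ⬝ᵥ x + q ⬝ᵥ y :=
  calc π ⬝ᵥ h ≤ π ⬝ᵥ (T *ᵥ x + W *ᵥ y) := dotProduct_le_dotProduct_of_nonneg_left hfeas hπ
    _ = (π ᵥ* T) ⬝ᵥ x + (π ᵥ* W) ⬝ᵥ y := by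
        rw [dotProduct_add, dotProduct_mulVec, dotProduct_mulVec]
    _ ≤ (π ᵥ* T) ⬝ᵥ x + q ⬝ᵥ y := by
        gcongr
        exact dotProduct_le_dotProduct_of_nonneg_right hq hy

end LinearDuality

theorem dotProduct_Ghat {m n1 n2 d : ℕ} (gbar : Fin m → Matrix (Fin d) (Fin n1) ℝ)
    (gtil : Fin m → Matrix (Fin d) (Fin n2) ℝ) (x : Fin n1 → ℝ) (y : Fin m → Fin n2 → ℝ)
    (c : Fin d → ℝ) (s : Fin m) :
    c ⬝ᵥ Ghat gbar gtil x y s = (c ᵥ* gbar s) ⬝ᵥ x + (c ᵥ* gtil s) ⬝ᵥ y s := by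
  rw [Ghat, dotProduct_add, dotProduct_mulVec, dotProduct_mulVec]

theorem linear_weak_duality_general
    (m m1 m2 n1 n2 d τ : ℕ)
    (p : Fin m → ℝ) (hp : ∀ s, 0 < p s)
    (α : ℝ)
    (A : Matrix (Fin m1) (Fin n1) ℝ) (b : Fin m1 → ℝ) (fv : Fin n1 → ℝ)
    (Tm : Fin m → Matrix (Fin m2) (Fin n1) ℝ)
    (Wm : Fin m → Matrix (Fin m2) (Fin n2) ℝ)
    (q : Fin m → Fin n2 → ℝ) (hvec : Fin m → Fin m2 → ℝ)
    (gbar : Fin m → Matrix (Fin d) (Fin n1) ℝ)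
    (gtil : Fin m → Matrix (Fin d) (Fin n2) ℝ)
    (z : Fin τ → Fin d → ℝ)
    (pt : Fin τ → ℝ)
    (C : Set (Fin d → ℝ))
    (x : Fin n1 → ℝ) (y : Fin m → Fin n2 → ℝ)
    (K : ℕ) (c : Fin K → Fin d → ℝ) (mw : Fin K → ℝ) (nw : Fin m → Fin K → ℝ)
    (lam : Fin m1 → ℝ) (piv : Fin m → Fin m2 → ℝ)
    (hPfeas : PrimalFeas α p A b Tm Wm hvec gbar gtil z pt C x y)
    (hDfeas : DualFeas α p A fv Tm Wm q gbar gtil C c mw nw lam piv) :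
    DualObj α p b hvec z pt c mw lam piv ≤ PrimalObj p fv q x y := by
  obtain ⟨⟨hx, hAx, hY⟩, hCVaR⟩ := hPfeas
  obtain ⟨hcC, hmw, hnw, hlam, hpiv, hmass, hdens, hdual1, hdual2⟩ := hDfeas
  set r : Fin m → Fin n2 → ℝ := fun s => ∑ k, nw s k • (c k ᵥ* gtil s)
  set u : Fin n1 → ℝ := ∑ s, p s • (piv s ᵥ* Tm s - ∑ k, nw s k • (c k ᵥ* gbar s))
  have hfirst : u ⬝ᵥ x ≤ fv ⬝ᵥ x + lam ⬝ᵥ b :=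
    dotProduct_le_of_mulVec_le hx hAx hlam fun j => by simpa [u] using hdual1 j
  have hsecond : ∀ s, piv s ⬝ᵥ hvec s ≤ (piv s ᵥ* Tm s) ⬝ᵥ x + (q s + r s) ⬝ᵥ y s :=
    fun s => dotProduct_le_of_le_mulVec_add_mulVec (hY s).1 (hY s).2 (hpiv s) fun j => by
      simpa [r, sub_le_iff_le_add'] using hdual2 s j
  have hrisk : ∀ k, ∑ s, p s * nw s k * (c k ⬝ᵥ Ghat gbar gtil x y s)
      ≤ mw k * CVaR α pt (fun i => c k ⬝ᵥ z i) := fun k =>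
    (sum_mul_le_mul_CVaR (fun s => (hp s).le) (fun s => hnw s k) (hmass k)
      (fun s => hdens s k)).trans
      (mul_le_mul_of_nonneg_left (hCVaR (c k) (hcC k)) (hmw k))
  have hsplit : ∑ s, p s * ((piv s ᵥ* Tm s) ⬝ᵥ x + (q s + r s) ⬝ᵥ y s)
      = u ⬝ᵥ x + ∑ s, p s * (q s ⬝ᵥ y s)
        + ∑ k, ∑ s, p s * nw s k * (c k ⬝ᵥ Ghat gbar gtil x y s) := by
    simp only [u, r, sum_dotProduct, smul_dotProduct, sub_dotProduct, add_dotProduct,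
      dotProduct_Ghat, smul_eq_mul]
    rw [sum_comm (γ := Fin K), ← sum_add_distrib, ← sum_add_distrib]
    refine sum_congr rfl fun s _ => ?_
    simp only [mul_add, mul_sub, mul_sum, mul_assoc, sum_add_distrib]
    ring
  have hsum_second := sum_le_sum fun s (_ : s ∈ univ) =>
    mul_le_mul_of_nonneg_left (hsecond s) (hp s).le
  have hsum_risk := sum_le_sum fun k (_ : k ∈ univ) => hrisk k
  rw [DualObj, PrimalObj]
  linarith

/-- weak duality between (LinearP) and (LinearD). -/
theorem linear_weak_duality
    (m m1 m2 n1 n2 d τ : ℕ)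
    (p : Fin m → ℝ) (hp : ∀ s, 0 < p s) (hp1 : ∑ s, p s = 1)
    (α : ℝ) (hα0 : 0 ≤ α) (hα1 : α < 1)
    (A : Matrix (Fin m1) (Fin n1) ℝ) (b : Fin m1 → ℝ) (fv : Fin n1 → ℝ)
    (Tm : Fin m → Matrix (Fin m2) (Fin n1) ℝ)
    (Wm : Fin m → Matrix (Fin m2) (Fin n2) ℝ)
    (q : Fin m → Fin n2 → ℝ) (hvec : Fin m → Fin m2 → ℝ)
    (gbar : Fin m → Matrix (Fin d) (Fin n1) ℝ)
    (gtil : Fin m → Matrix (Fin d) (Fin n2) ℝ)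
    (z : Fin τ → Fin d → ℝ)
    (pt : Fin τ → ℝ) (hpt : ∀ i, 0 < pt i) (hpt1 : ∑ i, pt i = 1)
    (C : Set (Fin d → ℝ)) (hCsub : C ⊆ {c | (∀ i, 0 ≤ c i) ∧ ∑ i, c i = 1})
    (hCpoly : ∃ F : Finset (Fin d → ℝ), C = convexHull ℝ (F : Set (Fin d → ℝ)))
    (x : Fin n1 → ℝ) (y : Fin m → Fin n2 → ℝ)
    (K : ℕ) (c : Fin K → Fin d → ℝ) (mw : Fin K → ℝ) (nw : Fin m → Fin K → ℝ)
    (lam : Fin m1 → ℝ) (piv : Fin m → Fin m2 → ℝ)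
    (hPfeas : PrimalFeas α p A b Tm Wm hvec gbar gtil z pt C x y)
    (hDfeas : DualFeas α p A fv Tm Wm q gbar gtil C c mw nw lam piv) :
    DualObj α p b hvec z pt c mw lam piv ≤ PrimalObj p fv q x y :=
  linear_weak_duality_general m m1 m2 n1 n2 d τ p hp α A b fv Tm Wm q hvec gbar gtil z pt C x y K c
    mw nw lam piv hPfeas hDfeas
end

section
/- Validity of the Benders feasibility cuts in the scenario-decomposition algorithm: fix a scenario s ∈ S and scalarization vectors c_1,…,c_L ∈ ℝ^d. Let γ ∈ ℝ^{m2} and β ∈ ℝ^L satisfy γ ≥ 0, β ≥ 0, and W_s⊤γ − Σ_{l=1}^L β_l g̃_s⊤c_l ≤ 0 componentwise. Then for every x ∈ ℝ^{n1}, η ∈ ℝ^L, w ∈ ℝ^L for which there exists y ∈ ℝ^{n2} with y ≥ 0, W_s y ≥ h_s − T_s x, and −c_l⊤g̃_s y ≥ c_l⊤ḡ_s x − η_l − w_l for all l = 1,…,L, one has 0 ≥ γ⊤(h_s − T_s x) + Σ_{l=1}^L β_l (c_l⊤ḡ_s x − η_l − w_l). -/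
open Matrix
open scoped BigOperators

/-! A feasibility cut is the aggregation, with nonnegative multipliers `(γ, β)`, of the second-stage
constraints `W y ≥ h - T x` and `-C g̃ y ≥ C ḡ x - η - w` (the rows of `C` being the `c l`). The dual
condition says the aggregated row is nonpositive, so on `y ≥ 0` the aggregated left-hand side is
`≤ 0`, and hence so is the aggregated right-hand side: this is the easy direction of Farkas' lemma. -/

section

variable {R m n : Type*} [Semiring R] [PartialOrder R] [IsOrderedRing R] [Fintype m] [Fintype n]

theorem dotProduct_nonpos_of_le_mulVec (A : Matrix m n R) {u b : m → R} {y : n → R}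
    (hu : 0 ≤ u) (huA : u ᵥ* A ≤ 0) (hy : 0 ≤ y) (hb : b ≤ A *ᵥ y) : u ⬝ᵥ b ≤ 0 :=
  calc u ⬝ᵥ b ≤ u ⬝ᵥ (A *ᵥ y) := dotProduct_le_dotProduct_of_nonneg_left hb hu
    _ = (u ᵥ* A) ⬝ᵥ y := dotProduct_mulVec u A y
    _ ≤ 0 ⬝ᵥ y := dotProduct_le_dotProduct_of_nonneg_right huA hy
    _ = 0 := zero_dotProduct y

end

theorem benders_feasibility_cut_valid_general
    (m2 n1 n2 d L : ℕ)
    (Ws : Matrix (Fin m2) (Fin n2) ℝ) (Ts : Matrix (Fin m2) (Fin n1) ℝ)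
    (gbar : Matrix (Fin d) (Fin n1) ℝ) (gtil : Matrix (Fin d) (Fin n2) ℝ)
    (hs : Fin m2 → ℝ)
    (c : Fin L → Fin d → ℝ)
    (γ : Fin m2 → ℝ) (β : Fin L → ℝ)
    (hγ : ∀ i, 0 ≤ γ i) (hβ : ∀ l, 0 ≤ β l)
    (hdual : ∀ j, Matrix.vecMul γ Ws j - ∑ l, β l * Matrix.vecMul (c l) gtil j ≤ 0) :
    ∀ (x : Fin n1 → ℝ) (ηv w : Fin L → ℝ),
      (∃ y : Fin n2 → ℝ, (∀ j, 0 ≤ y j) ∧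
        (∀ i, hs i - Ts.mulVec x i ≤ Ws.mulVec y i) ∧
        ∀ l, c l ⬝ᵥ gbar.mulVec x - ηv l - w l ≤ -(c l ⬝ᵥ gtil.mulVec y)) →
      γ ⬝ᵥ (hs - Ts.mulVec x) + ∑ l, β l * (c l ⬝ᵥ gbar.mulVec x - ηv l - w l) ≤ 0 := by
  rintro x ηv w ⟨y, hy, hW, hc⟩
  let B : Matrix (Fin L) (Fin n2) ℝ := of fun l => -(c l ᵥ* gtil)
  have hB : ∀ l, (B *ᵥ y) l = -(c l ⬝ᵥ gtil *ᵥ y) := fun l => by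
    rw [dotProduct_mulVec, ← neg_dotProduct]; rfl
  have hdualB : Sum.elim γ β ᵥ* fromRows Ws B ≤ 0 := fun j => by
    simpa [sumElim_vecMul_fromRows, B, vecMul_neg, vecMul, dotProduct, sub_eq_add_neg] using hdual j
  have hcut := dotProduct_nonpos_of_le_mulVec (fromRows Ws B)
    (b := Sum.elim (hs - Ts *ᵥ x) fun l => c l ⬝ᵥ gbar *ᵥ x - ηv l - w l)
    (by rintro (i | l) <;> simp [hγ, hβ]) hdualB hy
    (by rintro (i | l) <;> simp [hB, hW, hc])
  simpa [sumElim_dotProduct_sumElim, dotProduct] using hcut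

/-- validity of the Benders feasibility cuts in the
scenario-decomposition algorithm. -/
theorem benders_feasibility_cut_valid
    (m1 m2 n1 n2 d L : ℕ)
    (Ws : Matrix (Fin m2) (Fin n2) ℝ) (Ts : Matrix (Fin m2) (Fin n1) ℝ)
    (gbar : Matrix (Fin d) (Fin n1) ℝ) (gtil : Matrix (Fin d) (Fin n2) ℝ)
    (q : Fin n2 → ℝ) (hs : Fin m2 → ℝ)
    (c : Fin L → Fin d → ℝ)
    (γ : Fin m2 → ℝ) (β : Fin L → ℝ)
    (hγ : ∀ i, 0 ≤ γ i) (hβ : ∀ l, 0 ≤ β l)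
    (hdual : ∀ j, Matrix.vecMul γ Ws j - ∑ l, β l * Matrix.vecMul (c l) gtil j ≤ 0) :
    ∀ (x : Fin n1 → ℝ) (ηv w : Fin L → ℝ),
      (∃ y : Fin n2 → ℝ, (∀ j, 0 ≤ y j) ∧
        (∀ i, hs i - Ts.mulVec x i ≤ Ws.mulVec y i) ∧
        ∀ l, c l ⬝ᵥ gbar.mulVec x - ηv l - w l ≤ -(c l ⬝ᵥ gtil.mulVec y)) →
      γ ⬝ᵥ (hs - Ts.mulVec x) + ∑ l, β l * (c l ⬝ᵥ gbar.mulVec x - ηv l - w l) ≤ 0 :=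
  benders_feasibility_cut_valid_general m2 n1 n2 d L Ws Ts gbar gtil hs c γ β hγ hβ hdual
end

section
/- Finite reduction of the increasing convex order (expected-shortfall) constraint on a finite probability space: let X have realizations x_s with probabilities p_s (s ∈ S) and let Z have realizations ζ_t with probabilities p̃_t (t ∈ T). Then Σ_{s∈S} p_s max(x_s − η, 0) ≤ Σ_{t∈T} p̃_t max(ζ_t − η, 0) holds for all η ∈ ℝ if and only if Σ_{s∈S} p_s max(x_s − ζ_t, 0) ≤ Σ_{i∈T} p̃_i max(ζ_i − ζ_t, 0) holds for all t ∈ T. -/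
/-!
The left-hand side `F η = ∑ₛ pₛ (xₛ - η)⁺` is convex and antitone in `η`, and has slope at least `-1`
because the `pₛ` sum to one. The right-hand side `G η = ∑ₜ p̃ₜ (ζₜ - η)⁺` is piecewise affine with
kinks only at the atoms `ζₜ`: it has slope exactly `-1` below the smallest atom and vanishes above
the largest one. Hence `F ≤ G` at the atoms propagates to every `η`: below the atoms by comparing
slopes, above them by monotonicity, and between two adjacent atoms because a convex function
lies below the chord, which is `G` itself there.
-/

open Finset Set

section ExpectedShortfall

variable {ι κ : Type*} [Fintype ι] [Fintype κ]

def expectedShortfall (w x : ι → ℝ) (η : ℝ) : ℝ :=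
  ∑ i, w i * max (x i - η) 0

lemma max_sub_le_max_sub_add {z a b : ℝ} (hab : a ≤ b) :
    max (z - a) 0 ≤ max (z - b) 0 + (b - a) :=
  max_le (by linarith [le_max_left (z - b) 0]) (by linarith [le_max_right (z - b) 0])

variable {w x : ι → ℝ}

lemma expectedShortfall_antitone (hw : ∀ i, 0 ≤ w i) : Antitone (expectedShortfall w x) :=
  fun _ _ hab => sum_le_sum fun i _ => by gcongr; exact hw i

lemma expectedShortfall_le_add_sub (hw : ∀ i, 0 ≤ w i) (hw1 : ∑ i, w i = 1) {a b : ℝ}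
    (hab : a ≤ b) : expectedShortfall w x a ≤ expectedShortfall w x b + (b - a) :=
  calc expectedShortfall w x a
      ≤ ∑ i, (w i * max (x i - b) 0 + w i * (b - a)) :=
        sum_le_sum fun i _ => by
          rw [← mul_add]; exact mul_le_mul_of_nonneg_left (max_sub_le_max_sub_add hab) (hw i)
    _ = expectedShortfall w x b + (b - a) := by
        rw [sum_add_distrib, ← sum_mul, hw1, one_mul, expectedShortfall]

lemma expectedShortfall_convexOn (hw : ∀ i, 0 ≤ w i) :
    ConvexOn ℝ univ (expectedShortfall w x) := by
  refine ⟨convex_univ, fun a _ b _ l mu hl hmu hlmu => ?_⟩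
  simp only [expectedShortfall, smul_eq_mul, mul_sum, ← sum_add_distrib]
  refine sum_le_sum fun i _ => ?_
  have hsplit : x i - (l * a + mu * b) = l * (x i - a) + mu * (x i - b) := by
    linear_combination x i * hlmu.symm
  have hpos : max (x i - (l * a + mu * b)) 0 ≤ l * max (x i - a) 0 + mu * max (x i - b) 0 := by
    rw [hsplit]
    refine max_le ?_ (by positivity)
    gcongr <;> exact le_max_left _ _
  calc w i * max (x i - (l * a + mu * b)) 0
      ≤ w i * (l * max (x i - a) 0 + mu * max (x i - b) 0) :=
        mul_le_mul_of_nonneg_left hpos (hw i)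
    _ = _ := by ring

lemma expectedShortfall_eq_add_sub (hw1 : ∑ i, w i = 1) {a b : ℝ} (hb : ∀ i, b ≤ x i)
    (hab : a ≤ b) : expectedShortfall w x a = expectedShortfall w x b + (b - a) := by
  have hterm : ∀ i, w i * max (x i - a) 0 = w i * max (x i - b) 0 + w i * (b - a) := fun i => by
    rw [max_eq_left (by linarith [hb i]), max_eq_left (by linarith [hb i])]
    ring
  simp only [expectedShortfall, hterm, sum_add_distrib, ← sum_mul, hw1, one_mul]

lemma expectedShortfall_eq_zero {η : ℝ} (hη : ∀ i, x i ≤ η) : expectedShortfall w x η = 0 :=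
  sum_eq_zero fun i _ => by rw [max_eq_right (by linarith [hη i]), mul_zero]

lemma expectedShortfall_combo_eq {a b l mu : ℝ} (hl : 0 ≤ l) (hmu : 0 ≤ mu) (hlmu : l + mu = 1)
    (hab : a ≤ b) (hgap : ∀ i, x i ≤ a ∨ b ≤ x i) :
    expectedShortfall w x (l • a + mu • b) =
      l • expectedShortfall w x a + mu • expectedShortfall w x b := by
  obtain ⟨hlo, hhi⟩ := segment_subset_Icc hab ⟨l, mu, hl, hmu, hlmu, rfl⟩
  simp only [expectedShortfall, smul_eq_mul, mul_sum, ← sum_add_distrib] at hlo hhi ⊢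
  refine sum_congr rfl fun i _ => ?_
  rcases hgap i with hi | hi
  · rw [max_eq_right (by linarith), max_eq_right (by linarith), max_eq_right (by linarith)]
    ring
  · rw [max_eq_left (by linarith), max_eq_left (by linarith), max_eq_left (by linarith)]
    linear_combination (w i * x i) * hlmu.symm

lemma exists_adjacent_atoms (ζ : κ → ℝ) {η : ℝ} {t₀ t₁ : κ} (h₀ : ζ t₀ ≤ η) (h₁ : η < ζ t₁) :
    ∃ ta tb, ζ ta ≤ η ∧ η < ζ tb ∧ ∀ i, ζ i ≤ ζ ta ∨ ζ tb ≤ ζ i := by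
  obtain ⟨ta, hta, hmax⟩ := exists_max_image {i | ζ i ≤ η} ζ ⟨t₀, by simpa using h₀⟩
  obtain ⟨tb, htb, hmin⟩ := exists_min_image {i | η < ζ i} ζ ⟨t₁, by simpa using h₁⟩
  simp only [Finset.mem_filter, Finset.mem_univ, true_and] at hta htb hmax hmin
  refine ⟨ta, tb, hta, htb, fun i => ?_⟩
  rcases le_or_gt (ζ i) η with hi | hi
  exacts [Or.inl (hmax i hi), Or.inr (hmin i hi)]

lemma expectedShortfall_le_of_le_at_atoms {v ζ : κ → ℝ} (hw : ∀ i, 0 ≤ w i)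
    (hw1 : ∑ i, w i = 1) (hv1 : ∑ t, v t = 1)
    (h : ∀ t, expectedShortfall w x (ζ t) ≤ expectedShortfall v ζ (ζ t)) (η : ℝ) :
    expectedShortfall w x η ≤ expectedShortfall v ζ η := by
  have : Nonempty κ := by
    by_contra hκ
    simp [not_nonempty_iff.mp hκ] at hv1
  obtain ⟨t₀, hmin⟩ := Finite.exists_min ζ
  obtain ⟨t₁, hmax⟩ := Finite.exists_max ζ
  rcases lt_or_ge η (ζ t₀) with hlow | hlow
  · calc expectedShortfall w x η
        ≤ expectedShortfall w x (ζ t₀) + (ζ t₀ - η) := expectedShortfall_le_add_sub hw hw1 hlow.le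
      _ ≤ expectedShortfall v ζ (ζ t₀) + (ζ t₀ - η) := by gcongr; exact h t₀
      _ = expectedShortfall v ζ η := (expectedShortfall_eq_add_sub hv1 hmin hlow.le).symm
  rcases le_or_gt (ζ t₁) η with hhigh | hhigh
  · calc expectedShortfall w x η
        ≤ expectedShortfall w x (ζ t₁) := expectedShortfall_antitone hw hhigh
      _ ≤ expectedShortfall v ζ (ζ t₁) := h t₁
      _ = expectedShortfall v ζ η := by
        rw [expectedShortfall_eq_zero hmax, expectedShortfall_eq_zero fun i => (hmax i).trans hhigh]
  obtain ⟨ta, tb, ha, hb, hgap⟩ := exists_adjacent_atoms ζ hlow hhigh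
  obtain ⟨l, mu, hl, hmu, hlmu, rfl⟩ : η ∈ segment ℝ (ζ ta) (ζ tb) := by
    rw [segment_eq_Icc (ha.trans hb.le)]
    exact ⟨ha, hb.le⟩
  calc expectedShortfall w x (l • ζ ta + mu • ζ tb)
      ≤ l • expectedShortfall w x (ζ ta) + mu • expectedShortfall w x (ζ tb) :=
        (expectedShortfall_convexOn hw).2 trivial trivial hl hmu hlmu
    _ ≤ l • expectedShortfall v ζ (ζ ta) + mu • expectedShortfall v ζ (ζ tb) := by
        gcongr
        exacts [h ta, h tb]
    _ = expectedShortfall v ζ (l • ζ ta + mu • ζ tb) :=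
        (expectedShortfall_combo_eq hl hmu hlmu (ha.trans hb.le) hgap).symm

end ExpectedShortfall

theorem ico_finite_reduction_general
    (m τ : ℕ)
    (p : Fin m → ℝ) (hp : ∀ s, 0 < p s) (hp1 : ∑ s, p s = 1)
    (pt : Fin τ → ℝ) (hpt1 : ∑ t, pt t = 1)
    (x : Fin m → ℝ) (ζ : Fin τ → ℝ) :
    (∀ η : ℝ, ∑ s, p s * max (x s - η) 0 ≤ ∑ t, pt t * max (ζ t - η) 0) ↔
      ∀ t, ∑ s, p s * max (x s - ζ t) 0 ≤ ∑ i, pt i * max (ζ i - ζ t) 0 :=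
  ⟨fun h t => h (ζ t),
    expectedShortfall_le_of_le_at_atoms (fun s => (hp s).le) hp1 hpt1⟩

/-- finite reduction of the increasing convex order
(expected-shortfall) constraint on a finite probability space. -/
theorem ico_finite_reduction
    (m τ : ℕ)
    (p : Fin m → ℝ) (hp : ∀ s, 0 < p s) (hp1 : ∑ s, p s = 1)
    (pt : Fin τ → ℝ) (hpt : ∀ t, 0 < pt t) (hpt1 : ∑ t, pt t = 1)
    (x : Fin m → ℝ) (ζ : Fin τ → ℝ) :
    (∀ η : ℝ, ∑ s, p s * max (x s - η) 0 ≤ ∑ t, pt t * max (ζ t - η) 0) ↔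
      ∀ t, ∑ s, p s * max (x s - ζ t) 0 ≤ ∑ i, pt i * max (ζ i - ζ t) 0 :=
  ico_finite_reduction_general m τ p hp hp1 pt hpt1 x ζ
end
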